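/- Let W be an m×n real matrix and let λ₁, …, λₙ ≥ 0 be the eigenvalues (with multiplicity) of the positive semidefinite matrix WᵀW. Then for every real p×n matrix A of full column rank n, ‖A‖₂² · trace(WᵀW (AᵀA)⁻¹) ≥ (1/n) · (∑ᵢ₌₁ⁿ √λᵢ)², where ‖A‖₂ is the maximum Euclidean column norm of A. (Equivalently, the optimal total error of the (ε,δ)-matrix mechanism on workload W is at least P(ε,δ)·(1/n)(∑ᵢ σᵢ)², where σᵢ = √λᵢ are the singular values of W and P(ε,δ) = 2 log(2/δ)/ε².) -/

import Mathlib

/-!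
Write `B = AᵀA`, which is positive definite by the rank hypothesis, and let `qᵢ` be the columns
of the orthogonal `P`, so that `trace(WᵀW B⁻¹) = ∑ λᵢ cᵢ` with `cᵢ = qᵢᵀ B⁻¹ qᵢ`, while
`trace B = ∑ aᵢ` with `aᵢ = qᵢᵀ B qᵢ`. Cauchy–Schwarz for the form `B`, applied to `qᵢ` and `B⁻¹ qᵢ`,
gives `aᵢ cᵢ ≥ 1`, and Cauchy–Schwarz for sums gives
`(∑ √λᵢ)² ≤ (∑ √aᵢ √(λᵢ cᵢ))² ≤ (∑ aᵢ)(∑ λᵢ cᵢ) = trace B · trace(WᵀW B⁻¹)`.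
Finally `trace B` is the sum of the squared column norms of `A`, hence at most `n ‖A‖₂²`.
-/

open Matrix

theorem Real.sq_sum_sqrt_le_sum_mul_sum {ι : Type*} (s : Finset ι) {a c d : ι → ℝ}
    (hc : ∀ i, 0 ≤ c i) (hd : ∀ i, 0 ≤ d i) (hac : ∀ i, 1 ≤ a i * c i) :
    (∑ i ∈ s, √(d i)) ^ 2 ≤ (∑ i ∈ s, a i) * ∑ i ∈ s, d i * c i := by
  have ha (i : ι) : 0 ≤ a i := (pos_of_mul_pos_left (one_pos.trans_le (hac i)) (hc i)).le
  have hdc (i : ι) : 0 ≤ d i * c i := mul_nonneg (hd i) (hc i)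
  have hle : ∑ i ∈ s, √(d i) ≤ ∑ i ∈ s, √(a i) * √(d i * c i) :=
    Finset.sum_le_sum fun i _ => by
      rw [← Real.sqrt_mul (ha i)]
      exact Real.sqrt_le_sqrt (by nlinarith [hac i, hd i])
  calc (∑ i ∈ s, √(d i)) ^ 2
      ≤ (√(∑ i ∈ s, a i) * √(∑ i ∈ s, d i * c i)) ^ 2 :=
        pow_le_pow_left₀ (Finset.sum_nonneg fun i _ => Real.sqrt_nonneg _)
          (hle.trans (Real.sum_sqrt_mul_sqrt_le s ha hdc)) 2
    _ = (∑ i ∈ s, a i) * ∑ i ∈ s, d i * c i := by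
        rw [mul_pow, Real.sq_sqrt (Finset.sum_nonneg fun i _ => ha i),
          Real.sq_sqrt (Finset.sum_nonneg fun i _ => hdc i)]

namespace Matrix

variable {m n : Type*} [Fintype n]

theorem mulVec_injective_of_rank_eq_card {K : Type*} [Field K] {A : Matrix m n K}
    (hA : A.rank = Fintype.card n) : Function.Injective A.mulVec := by
  have h := LinearMap.finrank_range_add_finrank_ker A.mulVecLin
  rwa [← rank, hA, Module.finrank_fintype_fun_eq_card, add_eq_left,
    Submodule.finrank_eq_zero, LinearMap.ker_eq_bot] at h

theorem posDef_transpose_mul_self_of_rank_eq_card [Fintype m] {A : Matrix m n ℝ}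
    (hA : A.rank = Fintype.card n) : (Aᵀ * A).PosDef := by
  simpa using PosDef.conjTranspose_mul_self A (mulVec_injective_of_rank_eq_card hA)

theorem PosDef.one_le_diag_mul_inv_diag [DecidableEq n] {M : Matrix n n ℝ} (hM : M.PosDef)
    (i : n) : 1 ≤ M i i * M⁻¹ i i := by
  have hMM : M * M⁻¹ = 1 := mul_nonsing_inv M (isUnit_iff_isUnit_det M |>.mp hM.isUnit)
  have hsymm (x y : n → ℝ) : x ⬝ᵥ M *ᵥ y = y ⬝ᵥ M *ᵥ x := by
    rw [dotProduct_mulVec, ← mulVec_transpose, dotProduct_comm,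
      ← conjTranspose_eq_transpose_of_trivial, hM.1]
  set e : n → ℝ := Pi.single i 1
  set y := M⁻¹ *ᵥ e
  have hMy : M *ᵥ y = e := by rw [mulVec_mulVec, hMM, one_mulVec]
  have hCS := LinearMap.BilinForm.apply_mul_apply_le_of_forall_zero_le (toLinearMap₂' ℝ M)
    (fun x => by simpa [toLinearMap₂'_apply'] using hM.posSemidef.dotProduct_mulVec_nonneg x) e y
  simp only [toLinearMap₂'_apply'] at hCS
  rw [hsymm y e, hMy] at hCS
  simpa [e, y] using hCS

theorem trace_diagonal_mul {R : Type*} [CommSemiring R] [DecidableEq n] (d : n → R)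
    (M : Matrix n n R) : (diagonal d * M).trace = ∑ i, d i * M i i := by
  simp [trace, diagonal_mul]

theorem trace_transpose_mul_mul_of_mul_transpose_eq_one {R : Type*} [CommRing R] [DecidableEq n]
    {P : Matrix n n R} (hP : P * Pᵀ = 1) (M : Matrix n n R) : (Pᵀ * M * P).trace = M.trace := by
  rw [trace_mul_cycle, hP, Matrix.one_mul]

theorem inv_transpose_mul_mul_of_mul_transpose_eq_one {R : Type*} [CommRing R] [DecidableEq n]
    {P : Matrix n n R} (hP : P * Pᵀ = 1) (M : Matrix n n R) :
    (Pᵀ * M * P)⁻¹ = Pᵀ * M⁻¹ * P := by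
  rw [mul_inv_rev, mul_inv_rev, inv_eq_right_inv hP, inv_eq_right_inv (mul_eq_one_comm.mp hP),
    Matrix.mul_assoc]

theorem trace_transpose_mul_self_le_card_mul_iSup_sq [Fintype m] (A : Matrix m n ℝ) :
    (Aᵀ * A).trace ≤ Fintype.card n * (⨆ j, √(∑ i, A i j ^ 2)) ^ 2 := by
  have hcol (j : n) : (Aᵀ * A) j j ≤ (⨆ j, √(∑ i, A i j ^ 2)) ^ 2 := by
    have hsup := le_ciSup (Set.finite_range fun j => √(∑ i, A i j ^ 2)).bddAbove j
    calc (Aᵀ * A) j j = √(∑ i, A i j ^ 2) ^ 2 := by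
          rw [Real.sq_sqrt (Finset.sum_nonneg fun i _ => sq_nonneg _)]
          simp [mul_apply, sq]
      _ ≤ _ := pow_le_pow_left₀ (Real.sqrt_nonneg _) hsup 2
  simpa [trace] using Finset.sum_le_sum fun j (_ : j ∈ Finset.univ) => hcol j

end Matrix

theorem singular_value_bound_general (m n : ℕ)
    (W : Matrix (Fin m) (Fin n) ℝ) (lam : Fin n → ℝ) (hlam : ∀ i, 0 ≤ lam i)
    (P : Matrix (Fin n) (Fin n) ℝ) (hP : P * Pᵀ = 1)
    (hdiag : Wᵀ * W = P * Matrix.diagonal lam * Pᵀ) :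
    ∀ (p : ℕ) (A : Matrix (Fin p) (Fin n) ℝ), A.rank = n →
      (⨆ j, Real.sqrt (∑ i, (A i j) ^ 2)) ^ 2 * Matrix.trace (Wᵀ * W * (Aᵀ * A)⁻¹)
        ≥ (1 / n : ℝ) * (∑ i, Real.sqrt (lam i)) ^ 2 := by
  intro p A hA
  set X := Pᵀ * (Aᵀ * A) * P
  have hX : X.PosDef := by
    have hAP : (A * P).rank = Fintype.card (Fin n) := by
      rw [rank_mul_eq_left_of_isUnit_det P A (isUnit_det_of_right_inverse hP), hA,
        Fintype.card_fin]
    simpa [X, transpose_mul, Matrix.mul_assoc] using posDef_transpose_mul_self_of_rank_eq_card hAP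
  have htrace : (Wᵀ * W * (Aᵀ * A)⁻¹).trace = ∑ i, lam i * X⁻¹ i i := by
    rw [inv_transpose_mul_mul_of_mul_transpose_eq_one hP, ← trace_diagonal_mul, hdiag,
      Matrix.mul_assoc, Matrix.mul_assoc, trace_mul_comm]
    simp only [Matrix.mul_assoc]
  have hCS : (∑ i, √(lam i)) ^ 2 ≤ X.trace * ∑ i, lam i * X⁻¹ i i :=
    Real.sq_sum_sqrt_le_sum_mul_sum _ (fun i => hX.inv.diag_pos.le) hlam
      hX.one_le_diag_mul_inv_diag
  have hcol : X.trace ≤ n * (⨆ j, √(∑ i, A i j ^ 2)) ^ 2 := by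
    simpa [X, trace_transpose_mul_mul_of_mul_transpose_eq_one hP] using
      trace_transpose_mul_self_le_card_mul_iSup_sq A
  have hT : 0 ≤ ∑ i, lam i * X⁻¹ i i :=
    Finset.sum_nonneg fun i _ => mul_nonneg (hlam i) hX.inv.diag_pos.le
  rw [ge_iff_le, one_div_mul_eq_div, htrace]
  refine div_le_of_le_mul₀ (Nat.cast_nonneg n) (mul_nonneg (sq_nonneg _) hT) ?_
  calc (∑ i, √(lam i)) ^ 2 ≤ X.trace * ∑ i, lam i * X⁻¹ i i := hCS
    _ ≤ n * (⨆ j, √(∑ i, A i j ^ 2)) ^ 2 * ∑ i, lam i * X⁻¹ i i :=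
        mul_le_mul_of_nonneg_right hcol hT
    _ = _ := by ring

/-- **Singular value bound.**
Let `λ₁, …, λₙ ≥ 0` be the eigenvalues (with multiplicity) of the positive semidefinite
matrix `WᵀW`, exhibited by an orthogonal diagonalization `WᵀW = P (diagonal λ) Pᵀ`.
Then for every `p×n` strategy `A` of full column rank `n`,
`‖A‖₂² · trace(WᵀW (AᵀA)⁻¹) ≥ (1/n) (∑ᵢ √λᵢ)²`,
where `‖A‖₂` is the maximum Euclidean column norm of `A`. -/
theorem singular_value_bound (m n : ℕ) (hn : 0 < n)
    (W : Matrix (Fin m) (Fin n) ℝ) (lam : Fin n → ℝ) (hlam : ∀ i, 0 ≤ lam i)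
    (P : Matrix (Fin n) (Fin n) ℝ) (hP : P * Pᵀ = 1)
    (hdiag : Wᵀ * W = P * Matrix.diagonal lam * Pᵀ) :
    ∀ (p : ℕ) (A : Matrix (Fin p) (Fin n) ℝ), A.rank = n →
      (⨆ j, Real.sqrt (∑ i, (A i j) ^ 2)) ^ 2 * Matrix.trace (Wᵀ * W * (Aᵀ * A)⁻¹)
        ≥ (1 / n : ℝ) * (∑ i, Real.sqrt (lam i)) ^ 2 :=
  singular_value_bound_general m n W lam hlam P hP hdiag
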